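/- arXiv:2302.12855 — 7 statements merged into one kernel-verified Lean document; each statement's English description precedes it below -/
import Mathlib

section
/- If n > d ≥ 1, then P(n+1, d) ≥ (⌊n/d⌋ + 1) · P(n, d). -/
/-!
Extend each permutation `σ` of an optimal code `A` of minimum distance `d` on `n` points to
`n + 1` points by sending the new point to a value `v` and shifting the values `≥ v` up by one.
The shift never decreases the distance between two extensions with the same `v`, and extensions
with different `v`, `w` are at distance at least `|v − w|` in the new coordinate. Letting `v` run
over values pairwise at least `d` apart, such as the `⌊n/d⌋ + 1` multiples of `d` in `{0,…,n}`,
gives a code of minimum distance `d` on `n + 1` points with `(⌊n/d⌋ + 1) · |A|` elements.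
-/

/-- The Chebyshev distance between two permutations of `{1,…,n}`
(represented as permutations of `Fin n`): `max_i |σ(i) − τ(i)|`. -/
def permDist {n : ℕ} (σ τ : Equiv.Perm (Fin n)) : ℕ :=
  Finset.univ.sup fun i => Nat.dist (σ i : ℕ) (τ i : ℕ)

/-- `P n d` is the maximum cardinality of a set of permutations of `{1,…,n}`
whose pairwise Chebyshev distance is at least `d`. -/
noncomputable def P (n d : ℕ) : ℕ :=
  sSup {k | ∃ A : Finset (Equiv.Perm (Fin n)),
    (∀ σ ∈ A, ∀ τ ∈ A, σ ≠ τ → d ≤ permDist σ τ) ∧ A.card = k}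

open Finset

theorem Nat.le_dist_of_dvd_of_ne {d a b : ℕ} (ha : d ∣ a) (hb : d ∣ b) (hab : a ≠ b) :
    d ≤ Nat.dist a b := by
  refine Nat.le_of_dvd (by unfold Nat.dist; omega) ?_
  exact Nat.dvd_add (Nat.dvd_sub ha hb) (Nat.dvd_sub hb ha)

theorem Nat.card_filter_dvd_range_succ (n d : ℕ) :
    #{x ∈ range (n + 1) | d ∣ x} = n / d + 1 := by
  rw [range_eq_Ico, Ico_add_one_right_eq_Icc, Icc_eq_cons_Ioc (Nat.zero_le n),
    filter_cons_of_pos _ _ _ _ (dvd_zero d), card_cons, Nat.Ioc_filter_dvd_card_eq_div]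

theorem Fin.card_filter_dvd_val (n d : ℕ) : #{v : Fin (n + 1) | d ∣ (v : ℕ)} = n / d + 1 := by
  rw [← Nat.card_filter_dvd_range_succ, ← Nat.Iio_eq_range, ← Fin.map_valEmbedding_univ,
    filter_map, card_map]
  rfl

theorem Fin.dist_le_dist_succAbove {n : ℕ} (p : Fin (n + 1)) (i j : Fin n) :
    Nat.dist i j ≤ Nat.dist (p.succAbove i) (p.succAbove j) := by
  have val_succAbove (k : Fin n) : ((k : ℕ) < p ∧ (p.succAbove k : ℕ) = k) ∨
      ((p : ℕ) ≤ k ∧ (p.succAbove k : ℕ) = k + 1) := by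
    rcases lt_or_ge k.castSucc p with h | h
    · exact .inl ⟨h, by rw [succAbove_of_castSucc_lt _ _ h, val_castSucc]⟩
    · exact .inr ⟨h, by rw [succAbove_of_le_castSucc _ _ h, val_succ]⟩
  unfold Nat.dist
  rcases val_succAbove i with ⟨_, hi⟩ | ⟨_, hi⟩ <;>
    rcases val_succAbove j with ⟨_, hj⟩ | ⟨_, hj⟩ <;> omega

namespace Equiv.Perm

variable {n : ℕ}

theorem dist_le_permDist (σ τ : Perm (Fin n)) (i : Fin n) :
    Nat.dist (σ i) (τ i) ≤ permDist σ τ :=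
  le_sup (f := fun i => Nat.dist (σ i : ℕ) (τ i : ℕ)) (mem_univ i)

def insertLast (v : Fin (n + 1)) (σ : Perm (Fin n)) : Perm (Fin (n + 1)) :=
  (finSuccEquivLast.trans σ.optionCongr).trans (finSuccEquiv' v).symm

@[simp]
theorem insertLast_last (v : Fin (n + 1)) (σ : Perm (Fin n)) :
    insertLast v σ (Fin.last n) = v := by
  simp [insertLast, finSuccEquivLast_last]

@[simp]
theorem insertLast_castSucc (v : Fin (n + 1)) (σ : Perm (Fin n)) (i : Fin n) :
    insertLast v σ i.castSucc = v.succAbove (σ i) := by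
  simp [insertLast, finSuccEquivLast_castSucc]

theorem insertLast_injective2 : Function.Injective2 (insertLast (n := n)) := by
  intro v w σ τ h
  obtain rfl : v = w := by simpa using congr($h (Fin.last n))
  refine ⟨rfl, Equiv.ext fun i => v.succAbove_right_injective ?_⟩
  simpa using congr($h i.castSucc)

theorem permDist_le_permDist_insertLast (v : Fin (n + 1)) (σ τ : Perm (Fin n)) :
    permDist σ τ ≤ permDist (insertLast v σ) (insertLast v τ) :=
  Finset.sup_le fun i _ => (v.dist_le_dist_succAbove (σ i) (τ i)).trans <| by
    simpa using dist_le_permDist (insertLast v σ) (insertLast v τ) i.castSucc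

theorem dist_le_permDist_insertLast (v w : Fin (n + 1)) (σ τ : Perm (Fin n)) :
    Nat.dist v w ≤ permDist (insertLast v σ) (insertLast w τ) := by
  simpa using dist_le_permDist (insertLast v σ) (insertLast w τ) (Fin.last n)

end Equiv.Perm

open Equiv Perm

theorem bddAbove_setOf_card_code (n d : ℕ) :
    BddAbove {k | ∃ A : Finset (Perm (Fin n)),
      (∀ σ ∈ A, ∀ τ ∈ A, σ ≠ τ → d ≤ permDist σ τ) ∧ A.card = k} :=
  ⟨Fintype.card (Perm (Fin n)), by rintro k ⟨A, -, rfl⟩; exact card_le_univ A⟩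

theorem exists_card_eq_P (n d : ℕ) : ∃ A : Finset (Perm (Fin n)),
    (A : Set (Perm (Fin n))).Pairwise (fun σ τ => d ≤ permDist σ τ) ∧ A.card = P n d :=
  Nat.sSup_mem (by exact ⟨0, ∅, by simp, rfl⟩) (bddAbove_setOf_card_code n d)

theorem card_le_P {n d : ℕ} {A : Finset (Perm (Fin n))}
    (hA : (A : Set (Perm (Fin n))).Pairwise (fun σ τ => d ≤ permDist σ τ)) : A.card ≤ P n d :=
  le_csSup (bddAbove_setOf_card_code n d) ⟨A, fun _ hσ _ hτ => hA hσ hτ, rfl⟩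

theorem card_mul_P_le_P_succ {n d : ℕ} (V : Finset (Fin (n + 1)))
    (hV : (V : Set (Fin (n + 1))).Pairwise (fun v w => d ≤ Nat.dist v w)) :
    V.card * P n d ≤ P (n + 1) d := by
  obtain ⟨A, hA, hcard⟩ := exists_card_eq_P n d
  have hinj : Function.Injective (Function.uncurry (insertLast (n := n))) :=
    insertLast_injective2.uncurry
  rw [← hcard, ← card_product, ← card_image_of_injective _ hinj]
  refine card_le_P ?_
  rw [coe_image, hinj.injOn.pairwise_image, coe_product]
  rintro ⟨v, σ⟩ ⟨hv, hσ⟩ ⟨w, τ⟩ ⟨hw, hτ⟩ hne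
  obtain rfl | hvw := eq_or_ne v w
  · exact (hA hσ hτ fun h => hne (Prod.ext rfl h)).trans (permDist_le_permDist_insertLast v σ τ)
  · exact (hV hv hw hvw).trans (dist_le_permDist_insertLast v w σ τ)

theorem stmt0_general (n d : ℕ) :
    (n / d + 1) * P n d ≤ P (n + 1) d := by
  rw [← Fin.card_filter_dvd_val n d]
  refine card_mul_P_le_P_succ _ fun v hv w hw hvw => ?_
  simp only [coe_filter, mem_univ, true_and, Set.mem_ofPred_eq] at hv hw
  exact Nat.le_dist_of_dvd_of_ne hv hw (Fin.val_injective.ne hvw)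

/-- If `n > d ≥ 1`, then `P(n+1, d) ≥ (⌊n/d⌋ + 1) · P(n, d)`. -/
theorem stmt0 (n d : ℕ) (hd : 1 ≤ d) (hn : d < n) :
    (n / d + 1) * P n d ≤ P (n + 1) d :=
  stmt0_general n d
end

section
/- Let d₁, d₂ ≥ 1, let a ≥ 1, and let r₁, r₂ be integers with 0 ≤ r₁ ≤ d₁ and 0 ≤ r₂ ≤ d₂. Set n₁ = a·d₁ + r₁, n₂ = a·d₂ + r₂, n = n₁ + n₂, and d = d₁ + d₂. Then P(n, d) ≥ P(n₁, d₁) · P(n₂, d₂). -/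
namespace Stmt3Aux

def f1 (d₁ d₂ r₁ x : ℕ) : ℕ := x + d₂ * ((x + d₁ - r₁) / d₁)

def f2 (d₁ d₂ r₁ y : ℕ) : ℕ := y + r₁ + d₁ * (y / d₂)

lemma f1_mono {d₁ d₂ r₁ : ℕ} {x y : ℕ} (h : x ≤ y) :
    f1 d₁ d₂ r₁ x ≤ f1 d₁ d₂ r₁ y := by
  have h1 : (x + d₁ - r₁) / d₁ ≤ (y + d₁ - r₁) / d₁ := Nat.div_le_div_right (by omega)
  have h2 := Nat.mul_le_mul_left d₂ h1
  unfold f1; omega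

lemma f1_lt {d₁ d₂ r₁ : ℕ} {x y : ℕ} (h : x < y) :
    f1 d₁ d₂ r₁ x < f1 d₁ d₂ r₁ y := by
  have h1 : (x + d₁ - r₁) / d₁ ≤ (y + d₁ - r₁) / d₁ := Nat.div_le_div_right (by omega)
  have h2 := Nat.mul_le_mul_left d₂ h1
  unfold f1; omega

lemma f2_mono {d₁ d₂ r₁ : ℕ} {x y : ℕ} (h : x ≤ y) :
    f2 d₁ d₂ r₁ x ≤ f2 d₁ d₂ r₁ y := by
  have h1 : x / d₂ ≤ y / d₂ := Nat.div_le_div_right h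
  have h2 := Nat.mul_le_mul_left d₁ h1
  unfold f2; omega

lemma f2_lt {d₁ d₂ r₁ : ℕ} {x y : ℕ} (h : x < y) :
    f2 d₁ d₂ r₁ x < f2 d₁ d₂ r₁ y := by
  have h1 : x / d₂ ≤ y / d₂ := Nat.div_le_div_right (le_of_lt h)
  have h2 := Nat.mul_le_mul_left d₁ h1
  unfold f2; omega

lemma f1_jump {d₁ d₂ r₁ : ℕ} (hd₁ : 0 < d₁) (hr₁ : r₁ ≤ d₁) {x y : ℕ} (h : x + d₁ ≤ y) :
    f1 d₁ d₂ r₁ x + (d₁ + d₂) ≤ f1 d₁ d₂ r₁ y := by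
  have h1 : (x + d₁ - r₁) / d₁ + 1 ≤ (y + d₁ - r₁) / d₁ := by
    have h2 : (x + d₁ - r₁ + d₁) / d₁ ≤ (y + d₁ - r₁) / d₁ := Nat.div_le_div_right (by omega)
    rwa [Nat.add_div_right _ hd₁] at h2
  have h3 := Nat.mul_le_mul_left d₂ h1
  rw [Nat.mul_add, Nat.mul_one] at h3
  unfold f1; omega

lemma f2_jump {d₁ d₂ r₁ : ℕ} (hd₂ : 0 < d₂) {x y : ℕ} (h : x + d₂ ≤ y) :
    f2 d₁ d₂ r₁ x + (d₁ + d₂) ≤ f2 d₁ d₂ r₁ y := by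
  have h1 : x / d₂ + 1 ≤ y / d₂ := by
    have h2 : (x + d₂) / d₂ ≤ y / d₂ := Nat.div_le_div_right h
    rwa [Nat.add_div_right _ hd₂] at h2
  have h3 := Nat.mul_le_mul_left d₁ h1
  rw [Nat.mul_add, Nat.mul_one] at h3
  unfold f2; omega

lemma f1_dist {d₁ d₂ r₁ : ℕ} (hd₁ : 0 < d₁) (hr₁ : r₁ ≤ d₁) {x y : ℕ} (h : d₁ ≤ Nat.dist x y) :
    d₁ + d₂ ≤ Nat.dist (f1 d₁ d₂ r₁ x) (f1 d₁ d₂ r₁ y) := by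
  rcases le_total x y with hle | hle
  · have h' : x + d₁ ≤ y := by simp [Nat.dist] at h; omega
    have hj := f1_jump (d₂ := d₂) (r₁ := r₁) hd₁ hr₁ h'
    have hm : f1 d₁ d₂ r₁ x ≤ f1 d₁ d₂ r₁ y := f1_mono hle
    simp [Nat.dist]; omega
  · have h' : y + d₁ ≤ x := by simp [Nat.dist] at h; omega
    have hj := f1_jump (d₂ := d₂) (r₁ := r₁) hd₁ hr₁ h'
    have hm : f1 d₁ d₂ r₁ y ≤ f1 d₁ d₂ r₁ x := f1_mono hle
    simp [Nat.dist]; omega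

lemma f2_dist {d₁ d₂ r₁ : ℕ} (hd₂ : 0 < d₂) {x y : ℕ} (h : d₂ ≤ Nat.dist x y) :
    d₁ + d₂ ≤ Nat.dist (f2 d₁ d₂ r₁ x) (f2 d₁ d₂ r₁ y) := by
  rcases le_total x y with hle | hle
  · have h' : x + d₂ ≤ y := by simp [Nat.dist] at h; omega
    have hj := f2_jump (d₁ := d₁) (r₁ := r₁) hd₂ h'
    have hm : f2 d₁ d₂ r₁ x ≤ f2 d₁ d₂ r₁ y := f2_mono hle
    simp [Nat.dist]; omega
  · have h' : y + d₂ ≤ x := by simp [Nat.dist] at h; omega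
    have hj := f2_jump (d₁ := d₁) (r₁ := r₁) hd₂ h'
    have hm : f2 d₁ d₂ r₁ y ≤ f2 d₁ d₂ r₁ x := f2_mono hle
    simp [Nat.dist]; omega

lemma f1_ne_f2 {d₁ d₂ r₁ : ℕ} (hd₁ : 0 < d₁) (hd₂ : 0 < d₂) (hr₁ : r₁ ≤ d₁) (x y : ℕ) :
    f1 d₁ d₂ r₁ x ≠ f2 d₁ d₂ r₁ y := by
  unfold f1 f2
  rcases lt_or_ge x r₁ with hx | hx
  · have h0 : (x + d₁ - r₁) / d₁ = 0 := Nat.div_eq_of_lt (by omega)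
    rw [h0]
    have h1 : 0 ≤ d₁ * (y / d₂) := Nat.zero_le _
    omega
  · obtain ⟨q, s, hs, hm⟩ : ∃ q s, s < d₁ ∧ x - r₁ = d₁ * q + s :=
      ⟨(x - r₁) / d₁, (x - r₁) % d₁, Nat.mod_lt _ hd₁, (Nat.div_add_mod _ d₁).symm⟩
    obtain ⟨k, t, ht, hy⟩ : ∃ k t, t < d₂ ∧ y = d₂ * k + t :=
      ⟨y / d₂, y % d₂, Nat.mod_lt _ hd₂, (Nat.div_add_mod _ d₂).symm⟩
    have hX : x + d₁ - r₁ = d₁ * (q + 1) + s := by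
      have : x + d₁ - r₁ = (x - r₁) + d₁ := by omega
      rw [this, hm]; ring
    have hq1 : (x + d₁ - r₁) / d₁ = q + 1 := by
      rw [hX, Nat.mul_add_div hd₁, Nat.div_eq_of_lt hs, Nat.add_zero]
    have hk1 : y / d₂ = k := by
      rw [hy, Nat.mul_add_div hd₂, Nat.div_eq_of_lt ht, Nat.add_zero]
    rw [hq1, hk1]
    intro hEq
    have hxm : x = r₁ + (d₁ * q + s) := by omega
    have key : (d₁ + d₂) * q + (d₂ + s) = (d₁ + d₂) * k + t := by
      rw [hxm, hy] at hEq
      nlinarith [hEq]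
    have hL : ((d₁ + d₂) * q + (d₂ + s)) % (d₁ + d₂) = d₂ + s := by
      rw [Nat.mul_add_mod, Nat.mod_eq_of_lt (by omega)]
    have hR : ((d₁ + d₂) * k + t) % (d₁ + d₂) = t := by
      rw [Nat.mul_add_mod, Nat.mod_eq_of_lt (by omega)]
    rw [key, hR] at hL
    omega

lemma f1_bound {d₁ d₂ a r₁ r₂ : ℕ} (hd₁ : 0 < d₁) {x : ℕ} (hx : x < a * d₁ + r₁) :
    f1 d₁ d₂ r₁ x < a * d₁ + r₁ + (a * d₂ + r₂) := by
  have h1 : (x + d₁ - r₁) / d₁ < a + 1 := by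
    rw [Nat.div_lt_iff_lt_mul hd₁]
    have : (a + 1) * d₁ = a * d₁ + d₁ := by ring
    omega
  have h2 : d₂ * ((x + d₁ - r₁) / d₁) ≤ d₂ * a := Nat.mul_le_mul_left d₂ (by omega)
  have h3 : d₂ * a = a * d₂ := Nat.mul_comm _ _
  unfold f1; omega

lemma f2_bound {d₁ d₂ a r₁ r₂ : ℕ} (hd₂ : 0 < d₂) (hr₂ : r₂ ≤ d₂) {y : ℕ}
    (hy : y < a * d₂ + r₂) :
    f2 d₁ d₂ r₁ y < a * d₁ + r₁ + (a * d₂ + r₂) := by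
  have h1 : y / d₂ < a + 1 := by
    rw [Nat.div_lt_iff_lt_mul hd₂]
    have : (a + 1) * d₂ = a * d₂ + d₂ := by ring
    omega
  have h2 : d₁ * (y / d₂) ≤ d₁ * a := Nat.mul_le_mul_left d₁ (by omega)
  have h3 : d₁ * a = a * d₁ := Nat.mul_comm _ _
  unfold f2
  have hy0 : 0 < a * d₂ + r₂ := by omega
  omega

lemma bddAbove_P (n d : ℕ) :
    BddAbove {k | ∃ A : Finset (Equiv.Perm (Fin n)),
      (∀ σ ∈ A, ∀ τ ∈ A, σ ≠ τ → d ≤ permDist σ τ) ∧ A.card = k} := by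
  refine ⟨Fintype.card (Equiv.Perm (Fin n)), ?_⟩
  rintro k ⟨A, -, rfl⟩
  exact Finset.card_le_univ A

lemma exists_P (n d : ℕ) :
    ∃ A : Finset (Equiv.Perm (Fin n)),
      (∀ σ ∈ A, ∀ τ ∈ A, σ ≠ τ → d ≤ permDist σ τ) ∧ A.card = P n d := by
  have hne : ({k | ∃ A : Finset (Equiv.Perm (Fin n)),
      (∀ σ ∈ A, ∀ τ ∈ A, σ ≠ τ → d ≤ permDist σ τ) ∧ A.card = k} : Set ℕ).Nonempty :=
    ⟨0, ∅, by simp, rfl⟩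
  have := Nat.sSup_mem hne (bddAbove_P n d)
  exact this

lemma le_P {n d k : ℕ}
    (h : ∃ A : Finset (Equiv.Perm (Fin n)),
      (∀ σ ∈ A, ∀ τ ∈ A, σ ≠ τ → d ≤ permDist σ τ) ∧ A.card = k) :
    k ≤ P n d :=
  le_csSup (bddAbove_P n d) h

end Stmt3Aux

open Stmt3Aux in
/-- For `d₁, d₂ ≥ 1`, `a ≥ 1`, `0 ≤ r₁ ≤ d₁`, `0 ≤ r₂ ≤ d₂`, with
`n₁ = a·d₁ + r₁`, `n₂ = a·d₂ + r₂`, `n = n₁ + n₂`, `d = d₁ + d₂`: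
`P(n, d) ≥ P(n₁, d₁) · P(n₂, d₂)`. -/
theorem stmt3 (d₁ d₂ a r₁ r₂ n₁ n₂ n d : ℕ)
    (hd₁ : 1 ≤ d₁) (hd₂ : 1 ≤ d₂) (ha : 1 ≤ a)
    (hr₁ : r₁ ≤ d₁) (hr₂ : r₂ ≤ d₂)
    (hn₁ : n₁ = a * d₁ + r₁) (hn₂ : n₂ = a * d₂ + r₂)
    (hn : n = n₁ + n₂) (hd : d = d₁ + d₂) :
    P n₁ d₁ * P n₂ d₂ ≤ P n d := by
  obtain ⟨A₁, hA₁, hc₁⟩ := exists_P n₁ d₁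
  obtain ⟨A₂, hA₂, hc₂⟩ := exists_P n₂ d₂
  -- the interleaving embedding
  have hb₁ : ∀ x : Fin n₁, f1 d₁ d₂ r₁ (x : ℕ) < n := by
    intro x
    have hx : (x : ℕ) < a * d₁ + r₁ := by have := x.2; omega
    have := f1_bound (a := a) (r₂ := r₂) (d₂ := d₂) hd₁ hx
    omega
  have hb₂ : ∀ y : Fin n₂, f2 d₁ d₂ r₁ (y : ℕ) < n := by
    intro y
    have hy : (y : ℕ) < a * d₂ + r₂ := by have := y.2; omega
    have := f2_bound (a := a) (r₁ := r₁) (d₁ := d₁) hd₂ hr₂ hy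
    omega
  set g : Fin n₁ ⊕ Fin n₂ → Fin n :=
    Sum.elim (fun x => ⟨f1 d₁ d₂ r₁ x, hb₁ x⟩) (fun y => ⟨f2 d₁ d₂ r₁ y, hb₂ y⟩) with hg
  have hginj : Function.Injective g := by
    rintro (x | x) (y | y) h
    · simp only [hg, Sum.elim_inl, Fin.mk.injEq] at h
      have hxy : (x : ℕ) = (y : ℕ) := by
        by_contra hne
        rcases Nat.lt_or_ge (x : ℕ) (y : ℕ) with hl | hl
        · exact absurd h (Nat.ne_of_lt (f1_lt hl))
        · have hl' : (y : ℕ) < (x : ℕ) := Nat.lt_of_le_of_ne hl (Ne.symm hne)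
          exact absurd h.symm (Nat.ne_of_lt (f1_lt hl'))
      exact congrArg Sum.inl (Fin.ext hxy)
    · simp only [hg, Sum.elim_inl, Sum.elim_inr, Fin.mk.injEq] at h
      exact absurd h (f1_ne_f2 hd₁ hd₂ hr₁ _ _)
    · simp only [hg, Sum.elim_inl, Sum.elim_inr, Fin.mk.injEq] at h
      exact absurd h.symm (f1_ne_f2 hd₁ hd₂ hr₁ _ _)
    · simp only [hg, Sum.elim_inr, Fin.mk.injEq] at h
      have hxy : (x : ℕ) = (y : ℕ) := by
        by_contra hne
        rcases Nat.lt_or_ge (x : ℕ) (y : ℕ) with hl | hl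
        · exact absurd h (Nat.ne_of_lt (f2_lt hl))
        · have hl' : (y : ℕ) < (x : ℕ) := Nat.lt_of_le_of_ne hl (Ne.symm hne)
          exact absurd h.symm (Nat.ne_of_lt (f2_lt hl'))
      exact congrArg Sum.inr (Fin.ext hxy)
  have hgbij : Function.Bijective g :=
    (Fintype.bijective_iff_injective_and_card g).2 ⟨hginj, by simp [hn]⟩
  set e : (Fin n₁ ⊕ Fin n₂) ≃ Fin n := Equiv.ofBijective g hgbij with he
  have heapp : ∀ z, e z = g z := fun z => rfl
  -- the combination map
  set F : Equiv.Perm (Fin n₁) × Equiv.Perm (Fin n₂) → Equiv.Perm (Fin n) :=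
    fun p => (e.symm.trans (Equiv.sumCongr p.1 p.2)).trans e with hF
  have hFapp : ∀ p z, F p (e z) = e (Equiv.sumCongr p.1 p.2 z) := by
    intro p z
    simp [hF]
  have hFinj : Function.Injective F := by
    intro p q h
    have h2 : ∀ z, Equiv.sumCongr p.1 p.2 z = Equiv.sumCongr q.1 q.2 z := by
      intro z
      apply e.injective
      rw [← hFapp, ← hFapp, h]
    have hp1 : p.1 = q.1 := by
      apply Equiv.ext
      intro i
      have h3 : p.1 i = q.1 i := by simpa using h2 (Sum.inl i)
      exact h3
    have hp2 : p.2 = q.2 := by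
      apply Equiv.ext
      intro i
      have h3 : p.2 i = q.2 i := by simpa using h2 (Sum.inr i)
      exact h3
    exact Prod.ext hp1 hp2
  set A : Finset (Equiv.Perm (Fin n)) := (A₁ ×ˢ A₂).image F with hA
  have hcard : A.card = A₁.card * A₂.card := by
    rw [hA, Finset.card_image_of_injective _ hFinj, Finset.card_product]
  have hprop : ∀ π ∈ A, ∀ π' ∈ A, π ≠ π' → d ≤ permDist π π' := by
    intro π hπ π' hπ' hne
    rw [hA, Finset.mem_image] at hπ hπ'
    obtain ⟨⟨σ, τ⟩, hp, rfl⟩ := hπ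
    obtain ⟨⟨σ', τ'⟩, hp', rfl⟩ := hπ'
    rw [Finset.mem_product] at hp hp'
    by_cases hσ : σ = σ'
    · have hτ : τ ≠ τ' := by
        intro hττ
        exact hne (by rw [hσ, hττ])
      have hD : d₂ ≤ permDist τ τ' := hA₂ τ hp.2 τ' hp'.2 hτ
      obtain ⟨i, -, hi⟩ := (Finset.le_sup_iff (show (0:ℕ) < d₂ from hd₂)).1 hD
      have hpt : d ≤ Nat.dist ((F (σ, τ)) (e (Sum.inr i)) : ℕ) ((F (σ', τ')) (e (Sum.inr i)) : ℕ) := by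
        rw [hFapp, hFapp]
        simp only [Equiv.sumCongr_apply, Sum.map_inr, heapp, hg, Sum.elim_inr]
        rw [hd]
        exact f2_dist hd₂ hi
      refine le_trans hpt ?_
      unfold permDist
      exact Finset.le_sup (f := fun j => Nat.dist ((F (σ, τ)) j : ℕ) ((F (σ', τ')) j : ℕ))
        (Finset.mem_univ (e (Sum.inr i)))
    · have hD : d₁ ≤ permDist σ σ' := hA₁ σ hp.1 σ' hp'.1 hσ
      obtain ⟨i, -, hi⟩ := (Finset.le_sup_iff (show (0:ℕ) < d₁ from hd₁)).1 hD
      have hpt : d ≤ Nat.dist ((F (σ, τ)) (e (Sum.inl i)) : ℕ) ((F (σ', τ')) (e (Sum.inl i)) : ℕ) := by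
        rw [hFapp, hFapp]
        simp only [Equiv.sumCongr_apply, Sum.map_inl, heapp, hg, Sum.elim_inl]
        rw [hd]
        exact f1_dist hd₁ hr₁ hi
      refine le_trans hpt ?_
      unfold permDist
      exact Finset.le_sup (f := fun j => Nat.dist ((F (σ, τ)) j : ℕ) ((F (σ', τ')) j : ℕ))
        (Finset.mem_univ (e (Sum.inl i)))
  rw [← hc₁, ← hc₂]
  exact le_P ⟨A, hprop, hcard⟩
end

section
/- Let n = a·d + b where a ≥ 1, d ≥ 1 and 0 ≤ b < d, and let C = {π a permutation of {1,…,n} : π(i) ≡ i (mod d) for all 1 ≤ i ≤ n}. Then any two distinct permutations in C have Chebyshev distance at least d, and |C| = ((a+1)!)^b · (a!)^{d−b}. -/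
open Finset Equiv Nat
open scoped Count

theorem Nat.dvd_dist_of_mod_eq {d x y : ℕ} (h : x % d = y % d) : d ∣ Nat.dist x y :=
  dvd_add (Nat.dvd_of_mod_eq_zero (Nat.sub_mod_eq_zero_of_mod_eq h))
    (Nat.dvd_of_mod_eq_zero (Nat.sub_mod_eq_zero_of_mod_eq h.symm))

theorem dist_le_permDist {n : ℕ} (σ τ : Perm (Fin n)) (i : Fin n) :
    Nat.dist (σ i) (τ i) ≤ permDist σ τ :=
  le_sup (f := fun j => Nat.dist (σ j : ℕ) (τ j : ℕ)) (mem_univ i)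

theorem le_permDist_of_mod_eq {n d : ℕ} {σ τ : Perm (Fin n)} (hne : σ ≠ τ)
    (h : ∀ i, (σ i : ℕ) % d = (τ i : ℕ) % d) : d ≤ permDist σ τ := by
  obtain ⟨i, hi⟩ : ∃ i, σ i ≠ τ i := by
    by_contra! h'
    exact hne (Equiv.ext h')
  calc d ≤ Nat.dist (σ i) (τ i) :=
        Nat.le_of_dvd (Nat.dist_pos_of_ne (Fin.val_ne_of_ne hi)) (Nat.dvd_dist_of_mod_eq (h i))
    _ ≤ permDist σ τ := dist_le_permDist σ τ i

theorem Fin.card_val_mod_eq (n : ℕ) {d r : ℕ} (hd : 0 < d) (hr : r < d) :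
    Fintype.card {i : Fin n // (i : ℕ) % d = r} = n / d + if r < n % d then 1 else 0 := by
  rw [← Nat.mod_eq_of_lt hr, ← Nat.count_modEq_card n hd, Nat.count_eq_card_fintype]
  exact Fintype.card_congr
    { toFun := fun i => ⟨i, i.1.2, i.2⟩
      invFun := fun k => ⟨⟨k, k.2.1⟩, k.2.2⟩ }

theorem card_perm_mod_eq (n : ℕ) {d : ℕ} (hd : 0 < d) :
    #{π : Perm (Fin n) | ∀ i, (π i : ℕ) % d = i % d} =
      ∏ r : Fin d, (n / d + if (r : ℕ) < n % d then 1 else 0)! := by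
  let f : Fin n → Fin d := fun i => ⟨i % d, Nat.mod_lt _ hd⟩
  have hf : ∀ π : Perm (Fin n), (∀ i, (π i : ℕ) % d = i % d) ↔ f ∘ π = f := fun π =>
    ⟨fun h => funext fun i => Fin.ext (h i), fun h i => congrArg Fin.val (congrFun h i)⟩
  simp_rw [hf]
  rw [← Fintype.card_subtype, DomMulAct.stabilizer_card f]
  refine prod_congr rfl fun r _ => ?_
  rw [← Fin.card_val_mod_eq n hd r.2]
  exact congrArg factorial (Fintype.card_congr (Equiv.subtypeEquivRight fun _ => Fin.ext_iff))

theorem prod_range_factorial_add_ite (q : ℕ) {s d : ℕ} (hs : s ≤ d) :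
    ∏ r ∈ range d, (q + if r < s then 1 else 0)! = (q + 1)! ^ s * q ! ^ (d - s) := by
  rw [← prod_range_mul_prod_Ico _ hs,
    prod_eq_pow_card fun r hr => by rw [if_pos (mem_range.mp hr)],
    prod_eq_pow_card fun r hr => by rw [if_neg (mem_Ico.mp hr).1.not_gt, add_zero],
    card_range, Nat.card_Ico]

theorem stmt4_general (n a d b : ℕ) (hd : 1 ≤ d) (hb : b < d)
    (hn : n = a * d + b)
    (C : Finset (Equiv.Perm (Fin n)))
    (hC : C = Finset.univ.filter fun π : Equiv.Perm (Fin n) =>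
      ∀ i : Fin n, (π i : ℕ) % d = (i : ℕ) % d) :
    (∀ π ∈ C, ∀ σ ∈ C, π ≠ σ → d ≤ permDist π σ) ∧
      C.card = (Nat.factorial (a + 1)) ^ b * (Nat.factorial a) ^ (d - b) := by
  subst hC
  constructor
  · intro π hπ σ hσ hne
    rw [mem_filter] at hπ hσ
    exact le_permDist_of_mod_eq hne fun i => (hπ.2 i).trans (hσ.2 i).symm
  · have hdiv : n / d = a := by
      rw [hn, mul_comm, Nat.mul_add_div hd, Nat.div_eq_of_lt hb, add_zero]
    have hmod : n % d = b := by
      rw [hn, Nat.mul_add_mod_of_lt hb]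
    rw [card_perm_mod_eq n hd,
      Fin.prod_univ_eq_prod_range (fun r => (n / d + if r < n % d then 1 else 0)!), hdiv, hmod,
      prod_range_factorial_add_ite a hb.le]

/-- Let `n = a·d + b` with `a ≥ 1`, `d ≥ 1`, `0 ≤ b < d`, and let
`C = {π : π(i) ≡ i (mod d) for all i}`. Then any two distinct members of `C`
have Chebyshev distance at least `d`, and `|C| = ((a+1)!)^b · (a!)^{d−b}`. -/
theorem stmt4 (n a d b : ℕ) (ha : 1 ≤ a) (hd : 1 ≤ d) (hb : b < d)
    (hn : n = a * d + b)
    (C : Finset (Equiv.Perm (Fin n)))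
    (hC : C = Finset.univ.filter fun π : Equiv.Perm (Fin n) =>
      ∀ i : Fin n, (π i : ℕ) % d = (i : ℕ) % d) :
    (∀ π ∈ C, ∀ σ ∈ C, π ≠ σ → d ≤ permDist π σ) ∧
      C.card = (Nat.factorial (a + 1)) ^ b * (Nat.factorial a) ^ (d - b) :=
  stmt4_general n a d b hd hb hn C hC
end

section
/- For any d ≥ 3 and k ≥ 1, P(dk + d − 1, d) ≥ ((k+1)^d − C(k+d−1, d−1)) · P(dk − 1, d), where C(k+d−1, d−1) is the binomial coefficient. -/
/-!
Take a code `A` of permutations of `Fin (dk - 1)` with pairwise Chebyshev distance `≥ d`. For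
each level vector `a ∈ [0, k]^d` put the value `d * a_j + ℓ_j` at position `dk - 1 + j`, where
`ℓ_j` is the length of a longest nondecreasing subsequence of `a_0, …, a_{j-1}` bounded by `a_j`,
and transplant each `σ ∈ A` order-preservingly onto the remaining values. As `ℓ_j < d` and `ℓ`
strictly increases along equal levels, the tail values are distinct; as `ℓ_j` depends only on the
prefix and is monotone in the bound, two level vectors that first differ at `j` have tail values
at position `j` in different blocks, at least `d` apart. Order embeddings expand distances, so
the extended code keeps distance `≥ d`. The tail values stay below `dk + d - 1` unless `a` is
nondecreasing with `a_{d-1} = k`, and there are at most `C(k + d - 1, d - 1)` such `a`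
(multisets of size `d - 1` in `[0, k]`).
-/

namespace ChebyshevCode

open Finset

/-- The dynamic program for the length of a longest nondecreasing subsequence of
`f 0, …, f (j - 1)` with all terms `≤ y`. -/
def longestMonoLE (f : ℕ → ℕ) : ℕ → ℕ → ℕ
  | 0, _ => 0
  | j + 1, y => max (longestMonoLE f j y) (if f j ≤ y then longestMonoLE f j (f j) + 1 else 0)

section LongestMono

variable (f : ℕ → ℕ)

lemma longestMonoLE_le : ∀ j y, longestMonoLE f j y ≤ j
  | 0, _ => le_rfl
  | j + 1, y => by
    have := longestMonoLE_le j y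
    have := longestMonoLE_le j (f j)
    simp only [longestMonoLE]
    split_ifs <;> omega

lemma longestMonoLE_mono {j y y' : ℕ} (h : y ≤ y') :
    longestMonoLE f j y ≤ longestMonoLE f j y' := by
  induction j with
  | zero => exact le_rfl
  | succ j ih =>
    simp only [longestMonoLE]
    split_ifs <;> omega

lemma longestMonoLE_le_of_le {i j : ℕ} (h : i ≤ j) (y : ℕ) :
    longestMonoLE f i y ≤ longestMonoLE f j y :=
  monotone_nat_of_le_succ (f := fun j => longestMonoLE f j y) (fun _ => le_max_left _ _) h

lemma longestMonoLE_add_one_le {i y : ℕ} (h : f i ≤ y) :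
    longestMonoLE f i (f i) + 1 ≤ longestMonoLE f (i + 1) y := by
  simp [longestMonoLE, h]

lemma longestMonoLE_congr {g : ℕ → ℕ} {j : ℕ} (h : ∀ i < j, f i = g i) (y : ℕ) :
    longestMonoLE f j y = longestMonoLE g j y := by
  induction j generalizing y with
  | zero => rfl
  | succ j ih =>
    have ih' := ih (fun i hi => h i (by omega))
    simp only [longestMonoLE, ih', h j (by omega)]

lemma chain_of_longestMonoLE_eq {j y : ℕ} (h : longestMonoLE f j y = j) :
    (∀ i < j, f i ≤ y) ∧ ∀ i, i + 1 < j → f i ≤ f (i + 1) := by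
  induction j generalizing y with
  | zero => simp
  | succ j ih =>
    have := longestMonoLE_le f j y
    have := longestMonoLE_le f j (f j)
    have hj : f j ≤ y ∧ longestMonoLE f j (f j) = j := by
      simp only [longestMonoLE] at h
      split_ifs at h with hy
      · exact ⟨hy, by omega⟩
      · omega
    obtain ⟨hle, hchain⟩ := ih hj.2
    refine ⟨fun i hi => ?_, fun i hi => ?_⟩
    · rcases Nat.lt_succ_iff_lt_or_eq.mp hi with hi | rfl
      · exact (hle i hi).trans hj.1
      · exact hj.1
    · rcases Nat.lt_succ_iff_lt_or_eq.mp hi with hi | hi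
      · exact hchain i hi
      · exact hi ▸ hle i (by omega)

end LongestMono

section Code

variable (d : ℕ) (f : ℕ → ℕ)

def code (j : ℕ) : ℕ := d * f j + longestMonoLE f j (f j)

lemma code_div_mod {j : ℕ} (hj : j < d) :
    code d f j / d = f j ∧ code d f j % d = longestMonoLE f j (f j) :=
  (Nat.div_mod_unique (by omega)).mpr ⟨add_comm _ _, (longestMonoLE_le f j (f j)).trans_lt hj⟩

lemma code_ne_code {i j : ℕ} (hij : i < j) (hj : j < d) : code d f i ≠ code d f j := by
  intro h
  obtain ⟨hdiv_i, hmod_i⟩ := code_div_mod d f (hij.trans hj)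
  obtain ⟨hdiv_j, hmod_j⟩ := code_div_mod d f hj
  have hlevel : f i = f j := hdiv_i.symm.trans (h ▸ hdiv_j)
  have hstep := longestMonoLE_add_one_le f hlevel.le
  have hmono := longestMonoLE_le_of_le f (by omega : i + 1 ≤ j) (f j)
  rw [h, hmod_j] at hmod_i
  rw [hlevel] at hstep hmod_i
  omega

lemma code_add_le_code {g : ℕ → ℕ} {j : ℕ} (hpre : ∀ i < j, f i = g i) (hlt : f j < g j) :
    code d f j + d ≤ code d g j := by
  have hL := longestMonoLE_congr f hpre (f j)
  have hmono := longestMonoLE_mono g (j := j) hlt.le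
  have hblock : d * f j + d ≤ d * g j := by
    simpa [Nat.mul_succ] using Nat.mul_le_mul_left d (Nat.succ_le_of_lt hlt)
  unfold code
  omega

lemma exists_le_dist_code {g : ℕ → ℕ} (h : ∃ i < d, f i ≠ g i) :
    ∃ j < d, d ≤ Nat.dist (code d f j) (code d g j) := by
  classical
  let j := Nat.find h
  obtain ⟨hjd, hj⟩ : j < d ∧ f j ≠ g j := Nat.find_spec h
  have hpre : ∀ i < j, f i = g i := fun i hi => by
    by_contra hne
    exact Nat.find_min h hi ⟨hi.trans hjd, hne⟩
  refine ⟨j, hjd, ?_⟩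
  unfold Nat.dist
  rcases lt_or_gt_of_ne hj with hlt | hlt
  · have := code_add_le_code d f hpre hlt
    omega
  · have := code_add_le_code d g (fun i hi => (hpre i hi).symm) hlt
    omega

lemma code_lt_or_chain {k j : ℕ} (hf : ∀ i < d, f i ≤ k) (hj : j < d) :
    code d f j < d * k + d - 1 ∨ f j = k ∧ ∀ i, i + 1 < d → f i ≤ f (i + 1) := by
  have hL := longestMonoLE_le f j (f j)
  unfold code
  rcases (hf j hj).lt_or_eq with hlt | hk
  · have : d * f j + d ≤ d * k := by
      simpa [Nat.mul_succ] using Nat.mul_le_mul_left d (Nat.succ_le_of_lt hlt)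
    omega
  · by_cases hfull : longestMonoLE f j (f j) = j ∧ j + 1 = d
    · obtain ⟨hle, hchain⟩ := chain_of_longestMonoLE_eq f hfull.1
      refine Or.inr ⟨hk, fun i hi => ?_⟩
      rcases Nat.lt_succ_iff_lt_or_eq.mp (hfull.2 ▸ hi) with hi | hi
      · exact hchain i hi
      · exact hi ▸ hle i (by omega)
    · subst hk
      omega

end Code

lemma bddAbove_card_separated (n d : ℕ) :
    BddAbove {k | ∃ A : Finset (Equiv.Perm (Fin n)),
      (∀ σ ∈ A, ∀ τ ∈ A, σ ≠ τ → d ≤ permDist σ τ) ∧ A.card = k} :=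
  ⟨Fintype.card (Equiv.Perm (Fin n)), by rintro _ ⟨A, -, rfl⟩; exact card_le_univ A⟩

lemma card_le_P {n d : ℕ} (A : Finset (Equiv.Perm (Fin n)))
    (hA : ∀ σ ∈ A, ∀ τ ∈ A, σ ≠ τ → d ≤ permDist σ τ) : #A ≤ P n d :=
  le_csSup (bddAbove_card_separated n d) ⟨A, hA, rfl⟩

lemma exists_card_eq_P (n d : ℕ) : ∃ A : Finset (Equiv.Perm (Fin n)),
    (∀ σ ∈ A, ∀ τ ∈ A, σ ≠ τ → d ≤ permDist σ τ) ∧ #A = P n d :=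
  Nat.sSup_mem ⟨0, by exact ⟨∅, by simp, rfl⟩⟩ (bddAbove_card_separated n d)

lemma dist_le_permDist {n : ℕ} (σ τ : Equiv.Perm (Fin n)) (i : Fin n) :
    Nat.dist (σ i) (τ i) ≤ permDist σ τ :=
  le_sup (f := fun i => Nat.dist (σ i : ℕ) (τ i : ℕ)) (mem_univ i)

lemma dist_le_dist_of_strictMono {m n : ℕ} {f : Fin m → Fin n} (hf : StrictMono f)
    (x y : Fin m) : Nat.dist x y ≤ Nat.dist (f x) (f y) := by
  wlog hxy : x ≤ y generalizing x y
  · rw [Nat.dist_comm, Nat.dist_comm (f x)]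
    exact this y x (le_of_not_ge hxy)
  have hcard : #(Icc x y) ≤ #(Icc (f x) (f y)) :=
    card_le_card_of_injOn f (fun z hz => by
      simp only [coe_Icc, Set.mem_Icc] at hz ⊢
      exact ⟨hf.monotone hz.1, hf.monotone hz.2⟩) hf.injective.injOn
  rw [Fin.card_Icc, Fin.card_Icc] at hcard
  have hfxy : f x ≤ f y := hf.monotone hxy
  rw [Nat.dist_eq_sub_of_le (Fin.le_iff_val_le_val.mp hxy),
    Nat.dist_eq_sub_of_le (Fin.le_iff_val_le_val.mp hfxy)]
  omega

section Extension

variable {m d : ℕ}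

noncomputable def complEnum (v : Fin d ↪ Fin (m + d)) : Fin m ↪o Fin (m + d) :=
  (univ.map v)ᶜ.orderEmbOfFin (by simp [card_compl])

lemma complEnum_ne (v : Fin d ↪ Fin (m + d)) (i : Fin m) (j : Fin d) :
    complEnum v i ≠ v j := by
  have := (univ.map v)ᶜ.orderEmbOfFin_mem (by simp [card_compl]) i
  simp only [mem_compl, mem_map, mem_univ, true_and, not_exists] at this
  exact fun h => this j h.symm

noncomputable def extendPerm (v : Fin d ↪ Fin (m + d)) (σ : Equiv.Perm (Fin m)) :
    Equiv.Perm (Fin (m + d)) :=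
  Equiv.ofBijective (Fin.append (complEnum v ∘ σ) v) <| Finite.injective_iff_bijective.mp <|
    Fin.append_injective_iff.mpr ⟨(complEnum v).injective.comp σ.injective, v.injective,
      fun i j => complEnum_ne v (σ i) j⟩

@[simp]
lemma extendPerm_castAdd (v : Fin d ↪ Fin (m + d)) (σ : Equiv.Perm (Fin m)) (i : Fin m) :
    extendPerm v σ (Fin.castAdd d i) = complEnum v (σ i) :=
  Fin.append_left _ _ i

@[simp]
lemma extendPerm_natAdd (v : Fin d ↪ Fin (m + d)) (σ : Equiv.Perm (Fin m)) (j : Fin d) :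
    extendPerm v σ (Fin.natAdd m j) = v j :=
  Fin.append_right _ _ j

lemma dist_le_permDist_extendPerm (v w : Fin d ↪ Fin (m + d)) (σ τ : Equiv.Perm (Fin m))
    (j : Fin d) : Nat.dist (v j) (w j) ≤ permDist (extendPerm v σ) (extendPerm w τ) := by
  simpa using dist_le_permDist (extendPerm v σ) (extendPerm w τ) (Fin.natAdd m j)

lemma permDist_le_permDist_extendPerm (v : Fin d ↪ Fin (m + d)) (σ τ : Equiv.Perm (Fin m)) :
    permDist σ τ ≤ permDist (extendPerm v σ) (extendPerm v τ) :=
  Finset.sup_le fun i _ =>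
    (dist_le_dist_of_strictMono (complEnum v).strictMono (σ i) (τ i)).trans <| by
      simpa using dist_le_permDist (extendPerm v σ) (extendPerm v τ) (Fin.castAdd d i)

lemma eq_and_eq_of_extendPerm_eq {v w : Fin d ↪ Fin (m + d)} {σ τ : Equiv.Perm (Fin m)}
    (h : extendPerm v σ = extendPerm w τ) : v = w ∧ σ = τ := by
  obtain rfl : v = w := DFunLike.ext _ _ fun j => by
    simpa using congr($h (Fin.natAdd m j))
  exact ⟨rfl, Equiv.ext fun i => (complEnum v).injective <| by
    simpa using congr($h (Fin.castAdd d i))⟩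

theorem card_mul_P_le_P_add {ι : Type*} [Fintype ι] (v : ι → Fin d ↪ Fin (m + d))
    (hv : Pairwise fun a b => ∃ j, d ≤ Nat.dist (v a j) (v b j)) :
    Fintype.card ι * P m d ≤ P (m + d) d := by
  classical
  obtain ⟨A, hA, hAcard⟩ := exists_card_eq_P m d
  have hinj : Function.Injective fun p : ι × Equiv.Perm (Fin m) => extendPerm (v p.1) p.2 := by
    rintro ⟨a, σ⟩ ⟨b, τ⟩ h
    obtain ⟨hvab, rfl⟩ := eq_and_eq_of_extendPerm_eq h
    obtain rfl : a = b := by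
      by_contra hab
      obtain ⟨j, hj⟩ := hv hab
      rw [hvab, Nat.dist_self] at hj
      exact absurd j.isLt (by omega)
    rfl
  rw [← hAcard, ← card_univ, ← card_product, ← card_image_of_injective _ hinj]
  apply card_le_P
  simp only [mem_image, mem_product, mem_univ, true_and, Prod.exists]
  rintro _ ⟨a, σ, hσ, rfl⟩ _ ⟨b, τ, hτ, rfl⟩ hne
  by_cases hab : a = b
  · subst hab
    exact (hA σ hσ τ hτ fun h => hne (h ▸ rfl)).trans (permDist_le_permDist_extendPerm _ _ _)
  · obtain ⟨j, hj⟩ := hv hab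
    exact hj.trans (dist_le_permDist_extendPerm _ _ _ _ j)

end Extension

lemma card_monotone_last_le (n k : ℕ) :
    Fintype.card {a : Fin (n + 1) → Fin (k + 1) // Monotone a ∧ a (Fin.last n) = Fin.last k} ≤
      (k + n).choose n := by
  let toSym : {a : Fin (n + 1) → Fin (k + 1) // Monotone a ∧ a (Fin.last n) = Fin.last k} →
      Sym (Fin (k + 1)) n :=
    fun a => ⟨List.ofFn (Fin.init a.1), by simp⟩
  have hinj : Function.Injective toSym := by
    rintro ⟨a, ha, hla⟩ ⟨b, hb, hlb⟩ h
    have hperm : (List.ofFn (Fin.init a)).Perm (List.ofFn (Fin.init b)) :=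
      Multiset.coe_eq_coe.mp (congrArg Subtype.val h)
    have hinit : Fin.init a = Fin.init b := List.ofFn_injective <|
      hperm.eq_of_sortedLE (ha.comp Fin.strictMono_castSucc.monotone).sortedLE_ofFn
        (hb.comp Fin.strictMono_castSucc.monotone).sortedLE_ofFn
    rw [Subtype.mk.injEq, ← Fin.snoc_init_self a, ← Fin.snoc_init_self b, hinit, hla, hlb]
  calc _ ≤ Fintype.card (Sym (Fin (k + 1)) n) := Fintype.card_le_of_injective _ hinj
    _ = (k + n).choose n := by rw [Sym.card_sym_eq_choose, Fintype.card_fin, Nat.add_right_comm,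
      Nat.add_sub_cancel]

def levelSeq {d m : ℕ} (a : Fin d → Fin m) (i : ℕ) : ℕ := if h : i < d then a ⟨i, h⟩ else 0

@[simp]
lemma levelSeq_apply {d m : ℕ} (a : Fin d → Fin m) (i : Fin d) : levelSeq a i = a i :=
  dif_pos i.isLt

abbrev GoodLevels (n k : ℕ) :=
  {a : Fin (n + 1) → Fin (k + 1) // ¬(Monotone a ∧ a (Fin.last n) = Fin.last k)}

lemma card_goodLevels_ge (n k : ℕ) :
    (k + 1) ^ (n + 1) - (k + n).choose n ≤ Fintype.card (GoodLevels n k) := by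
  rw [Fintype.card_subtype_compl, Fintype.card_fun, Fintype.card_fin, Fintype.card_fin]
  exact Nat.sub_le_sub_left (card_monotone_last_le n k) _

section GoodLevels

variable {n k : ℕ}

lemma code_lt_of_goodLevels (a : GoodLevels n k) (j : Fin (n + 1)) :
    code (n + 1) (levelSeq a.1) j < (n + 1) * k + n := by
  have hbound : ∀ i < n + 1, levelSeq a.1 i ≤ k := fun i hi => by
    simpa only [levelSeq, dif_pos hi] using Nat.lt_succ_iff.mp (a.1 ⟨i, hi⟩).isLt
  rcases code_lt_or_chain (n + 1) (levelSeq a.1) hbound j.isLt with h | ⟨htop, hchain⟩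
  · omega
  · refine absurd ?_ a.2
    have hmono : Monotone a.1 := Fin.monotone_iff_le_succ.mpr fun i => by
      have h := hchain i (by omega)
      rwa [show (i : ℕ) + 1 = i.succ from rfl, show (i : ℕ) = i.castSucc from rfl,
        levelSeq_apply, levelSeq_apply, Fin.val_fin_le] at h
    have hj : a.1 j = Fin.last k := Fin.ext (by simpa using htop)
    exact ⟨hmono, le_antisymm (Fin.le_last _) (hj ▸ hmono (Fin.le_last j) :)⟩

def codeEmb (a : GoodLevels n k) : Fin (n + 1) ↪ Fin ((n + 1) * k - 1 + (n + 1)) where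
  toFun j := ⟨code (n + 1) (levelSeq a.1) j, by have := code_lt_of_goodLevels a j; omega⟩
  inj' i j h := by
    have h' := Fin.val_eq_of_eq h
    by_contra hij
    rcases lt_or_gt_of_ne hij with hlt | hlt
    · exact code_ne_code _ _ hlt j.isLt h'
    · exact code_ne_code _ _ hlt i.isLt h'.symm

lemma codeEmb_separated :
    Pairwise fun a b : GoodLevels n k => ∃ j, n + 1 ≤ Nat.dist (codeEmb a j) (codeEmb b j) := by
  intro a b hab
  obtain ⟨x, hx⟩ := Function.ne_iff.mp (Subtype.coe_ne_coe.mpr hab)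
  obtain ⟨j, hj, hdist⟩ := exists_le_dist_code (n + 1) (levelSeq a.1) (g := levelSeq b.1)
    ⟨x, x.isLt, by simpa [Fin.val_inj] using hx⟩
  exact ⟨⟨j, hj⟩, hdist⟩

end GoodLevels

end ChebyshevCode

open ChebyshevCode

/-- For any `d ≥ 3` and `k ≥ 1`,
`P(dk + d − 1, d) ≥ ((k+1)^d − C(k+d−1, d−1)) · P(dk − 1, d)`. -/
theorem stmt9 (d k : ℕ) (hd : 3 ≤ d) (hk : 1 ≤ k) :
    ((k + 1) ^ d - Nat.choose (k + d - 1) (d - 1)) * P (d * k - 1) d ≤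
      P (d * k + d - 1) d := by
  obtain ⟨n, rfl⟩ : ∃ n, d = n + 1 := ⟨d - 1, by omega⟩
  have hpos : 1 ≤ (n + 1) * k := Nat.one_le_iff_ne_zero.mpr (by positivity)
  rw [show k + (n + 1) - 1 = k + n by omega, Nat.add_sub_cancel,
    show (n + 1) * k + (n + 1) - 1 = (n + 1) * k - 1 + (n + 1) by omega]
  calc ((k + 1) ^ (n + 1) - (k + n).choose n) * P ((n + 1) * k - 1) (n + 1)
      ≤ Fintype.card (GoodLevels n k) * P ((n + 1) * k - 1) (n + 1) :=
        Nat.mul_le_mul_right _ (card_goodLevels_ge n k)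
    _ ≤ P ((n + 1) * k - 1 + (n + 1)) (n + 1) := card_mul_P_le_P_add codeEmb codeEmb_separated
end

section
/- For n > d ≥ 2, P(n, d) · V(n, d−1) ≥ n!, i.e., P(n, d) ≥ n! / V(n, d−1). -/
/-- `V n d` is the number of permutations `π` of `{1,…,n}` with `|π(i) − i| ≤ d`
for all `i`. -/
def V (n d : ℕ) : ℕ :=
  (Finset.univ.filter fun π : Equiv.Perm (Fin n) =>
    ∀ i : Fin n, Nat.dist (π i : ℕ) (i : ℕ) ≤ d).card

/-!
Gilbert–Varshamov bound: a code of maximum size with minimum distance `d` is a covering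
code of radius `d - 1`, since otherwise an uncovered permutation could be added to it. As
right multiplication is an isometry of the Chebyshev distance, every ball of radius `d - 1`
has `V n (d - 1)` elements, so `P n d` such balls cover all `n!` permutations.
-/

namespace PermCode

variable {n : ℕ}

lemma permDist_self (σ : Equiv.Perm (Fin n)) : permDist σ σ = 0 := by
  simp [permDist]

lemma permDist_comm (σ τ : Equiv.Perm (Fin n)) : permDist σ τ = permDist τ σ := by
  simp [permDist, Nat.dist_comm]

lemma permDist_le_iff {σ τ : Equiv.Perm (Fin n)} {r : ℕ} :
    permDist σ τ ≤ r ↔ ∀ i, Nat.dist (σ i : ℕ) (τ i : ℕ) ≤ r := by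
  simp [permDist, Finset.sup_le_iff]

def ball (σ : Equiv.Perm (Fin n)) (r : ℕ) : Finset (Equiv.Perm (Fin n)) :=
  Finset.univ.filter fun τ => permDist σ τ ≤ r

lemma mem_ball {σ τ : Equiv.Perm (Fin n)} {r : ℕ} : τ ∈ ball σ r ↔ permDist σ τ ≤ r := by
  simp [ball]

lemma card_ball (σ : Equiv.Perm (Fin n)) (r : ℕ) : (ball σ r).card = V n r := by
  rw [V]
  refine Finset.card_bij (fun τ _ => τ * σ⁻¹) (fun τ hτ => ?_)
    (fun _ _ _ _ h => mul_right_cancel h) (fun ρ hρ => ⟨ρ * σ, ?_, by group⟩)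
  · simp only [Finset.mem_filter, Finset.mem_univ, true_and]
    intro i
    simpa [Nat.dist_comm] using permDist_le_iff.mp (mem_ball.mp hτ) (σ⁻¹ i)
  · simp only [Finset.mem_filter, Finset.mem_univ, true_and] at hρ
    exact mem_ball.mpr <| permDist_le_iff.mpr fun i => by simpa [Nat.dist_comm] using hρ (σ i)

def IsCode (d : ℕ) (A : Finset (Equiv.Perm (Fin n))) : Prop :=
  ∀ σ ∈ A, ∀ τ ∈ A, σ ≠ τ → d ≤ permDist σ τ

def codeSizes (n d : ℕ) : Set ℕ :=
  {k | ∃ A : Finset (Equiv.Perm (Fin n)), IsCode d A ∧ A.card = k}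

lemma bddAbove_codeSizes (n d : ℕ) : BddAbove (codeSizes n d) := by
  refine ⟨Fintype.card (Equiv.Perm (Fin n)), ?_⟩
  rintro k ⟨A, -, rfl⟩
  exact Finset.card_le_univ A

lemma exists_isCode_card_eq_P (n d : ℕ) :
    ∃ A : Finset (Equiv.Perm (Fin n)), IsCode d A ∧ A.card = P n d :=
  Nat.sSup_mem (s := codeSizes n d) ⟨0, ∅, by simp [IsCode], rfl⟩ (bddAbove_codeSizes n d)

lemma card_le_P {d : ℕ} {A : Finset (Equiv.Perm (Fin n))} (hA : IsCode d A) :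
    A.card ≤ P n d :=
  le_csSup (bddAbove_codeSizes n d) ⟨A, hA, rfl⟩

lemma IsCode.insert {d : ℕ} {A : Finset (Equiv.Perm (Fin n))} (hA : IsCode d A)
    {π : Equiv.Perm (Fin n)} (hπ : ∀ σ ∈ A, d ≤ permDist σ π) : IsCode d (insert π A) := by
  intro σ hσ τ hτ hne
  rcases Finset.mem_insert.mp hσ with hσ | hσ <;> rcases Finset.mem_insert.mp hτ with hτ | hτ
  · exact absurd (hσ.trans hτ.symm) hne
  · exact hσ ▸ permDist_comm τ π ▸ hπ τ hτ
  · exact hτ ▸ hπ σ hσ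
  · exact hA σ hσ τ hτ hne

lemma IsCode.exists_permDist_le_of_card_eq_P {d : ℕ} {A : Finset (Equiv.Perm (Fin n))}
    (hA : IsCode d A) (hcard : A.card = P n d) (π : Equiv.Perm (Fin n)) :
    ∃ σ ∈ A, permDist σ π ≤ d - 1 := by
  by_contra! hfar
  have hπA : π ∉ A := fun hπA => by have := hfar π hπA; rw [permDist_self] at this; omega
  have hπ : ∀ σ ∈ A, d ≤ permDist σ π := fun σ hσ => by have := hfar σ hσ; omega
  have := card_le_P (hA.insert hπ)
  rw [Finset.card_insert_of_notMem hπA] at this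
  omega

lemma factorial_le_card_mul_V {A : Finset (Equiv.Perm (Fin n))} {r : ℕ}
    (hcover : ∀ π, ∃ σ ∈ A, permDist σ π ≤ r) : n.factorial ≤ A.card * V n r :=
  calc n.factorial = (Finset.univ : Finset (Equiv.Perm (Fin n))).card := by
        rw [Finset.card_univ, Fintype.card_perm, Fintype.card_fin]
    _ ≤ (A.biUnion fun σ => ball σ r).card := Finset.card_le_card fun π _ => by
        obtain ⟨σ, hσ, hπ⟩ := hcover π
        exact Finset.mem_biUnion.mpr ⟨σ, hσ, mem_ball.mpr hπ⟩
    _ ≤ ∑ σ ∈ A, (ball σ r).card := Finset.card_biUnion_le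
    _ = A.card * V n r := by simp [card_ball]

end PermCode

open PermCode in
theorem stmt10_general (n d : ℕ) :
    Nat.factorial n ≤ P n d * V n (d - 1) := by
  obtain ⟨A, hA, hcard⟩ := exists_isCode_card_eq_P n d
  exact hcard ▸ factorial_le_card_mul_V (hA.exists_permDist_le_of_card_eq_P hcard)

/-- For `n > d ≥ 2`, `P(n, d) · V(n, d−1) ≥ n!`. -/
theorem stmt10 (n d : ℕ) (hd : 2 ≤ d) (hn : d < n) :
    Nat.factorial n ≤ P n d * V n (d - 1) :=
  stmt10_general n d
end

section
/- If d < n ≤ 2d, then P(n+1, d+1) ≥ P(n, d). -/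
/-! Extend each permutation `σ` of `Fin n` by sending the new last point to `d` and shifting every
value `≥ d` up by one. When `n ≤ 2d`, two values at distance `≥ d` must lie on opposite sides
of `d`, so the shift widens that gap by one: a code of minimum distance `d` in `S_n` becomes a
code of minimum distance `d + 1` in `S_{n+1}` of the same size. -/

open Function

lemma P_le_P_of_map {m m' d d' : ℕ} (f : Equiv.Perm (Fin m) → Equiv.Perm (Fin m'))
    (hf : Injective f) (hdist : ∀ σ τ, d ≤ permDist σ τ → d' ≤ permDist (f σ) (f τ)) :
    P m d ≤ P m' d' := by
  apply csSup_le_csSup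
  · exact ⟨Fintype.card (Equiv.Perm (Fin m')), fun k ⟨A, _, hk⟩ => hk ▸ A.card_le_univ⟩
  · exact ⟨0, ∅, by simp⟩
  · rintro k ⟨A, hA, rfl⟩
    refine ⟨A.image f, ?_, A.card_image_of_injective hf⟩
    simp only [Finset.mem_image]
    rintro _ ⟨σ, hσ, rfl⟩ _ ⟨τ, hτ, rfl⟩ hne
    exact hdist σ τ (hA σ hσ τ hτ (ne_of_apply_ne f hne))

lemma exists_le_dist_of_le_permDist {n d : ℕ} (hd : 0 < d) {σ τ : Equiv.Perm (Fin n)}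
    (h : d ≤ permDist σ τ) : ∃ i, d ≤ Nat.dist (σ i) (τ i) := by
  obtain ⟨i, -, hi⟩ := (Finset.le_sup_iff hd).mp h
  exact ⟨i, hi⟩

/-- The permutation of `Fin (n + 1)` sending `last n` to `p` and `castSucc i` to
`p.succAbove (σ i)`. -/
def insertLast {n : ℕ} (p : Fin (n + 1)) (σ : Equiv.Perm (Fin n)) : Equiv.Perm (Fin (n + 1)) :=
  (finSuccEquiv' (Fin.last n)).trans ((Equiv.optionCongr σ).trans (finSuccEquiv' p).symm)

lemma insertLast_castSucc {n : ℕ} (p : Fin (n + 1)) (σ : Equiv.Perm (Fin n)) (i : Fin n) :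
    insertLast p σ i.castSucc = p.succAbove (σ i) := by
  simp [insertLast, ← Fin.succAbove_last, finSuccEquiv'_succAbove, finSuccEquiv'_symm_some]

lemma insertLast_injective {n : ℕ} (p : Fin (n + 1)) : Injective (insertLast p) := by
  intro σ τ h
  ext i
  have := DFunLike.congr_fun h i.castSucc
  rw [insertLast_castSucc, insertLast_castSucc] at this
  exact congrArg Fin.val (Fin.succAbove_right_injective this)

lemma Fin.dist_succAbove_of_castSucc_lt_of_le {n : ℕ} {p : Fin (n + 1)} {a b : Fin n}
    (ha : a.castSucc < p) (hb : p ≤ b.castSucc) :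
    Nat.dist (p.succAbove a) (p.succAbove b) = Nat.dist a b + 1 := by
  rw [Fin.succAbove_of_castSucc_lt p a ha, Fin.succAbove_of_le_castSucc p b hb]
  simp only [Fin.lt_def, Fin.le_def, Fin.val_castSucc, Fin.val_succ] at ha hb ⊢
  rw [Nat.dist_eq_sub_of_le (by omega), Nat.dist_eq_sub_of_le (by omega)]
  omega

lemma Fin.le_dist_succAbove {n d : ℕ} (hn : n ≤ 2 * d) {p : Fin (n + 1)} (hp : (p : ℕ) = d)
    {a b : Fin n} (h : d ≤ Nat.dist a b) :
    d + 1 ≤ Nat.dist (p.succAbove a) (p.succAbove b) := by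
  wlog hab : (a : ℕ) ≤ b generalizing a b
  · rw [Nat.dist_comm] at h ⊢
    exact this h (by omega)
  have := b.isLt
  rw [Nat.dist_eq_sub_of_le hab] at h
  have ha : a.castSucc < p := by rw [Fin.lt_def, Fin.val_castSucc]; omega
  have hb : p ≤ b.castSucc := by rw [Fin.le_def, Fin.val_castSucc]; omega
  rw [Fin.dist_succAbove_of_castSucc_lt_of_le ha hb, Nat.dist_eq_sub_of_le hab]
  omega

lemma permDist_insertLast {n d : ℕ} (hd : 0 < d) (hn : n ≤ 2 * d) {p : Fin (n + 1)}
    (hp : (p : ℕ) = d) {σ τ : Equiv.Perm (Fin n)} (h : d ≤ permDist σ τ) :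
    d + 1 ≤ permDist (insertLast p σ) (insertLast p τ) := by
  obtain ⟨i, hi⟩ := exists_le_dist_of_le_permDist hd h
  refine Finset.le_sup_of_le (Finset.mem_univ i.castSucc) ?_
  rw [insertLast_castSucc, insertLast_castSucc]
  exact Fin.le_dist_succAbove hn hp hi

/-- If `d < n ≤ 2d`, then `P(n+1, d+1) ≥ P(n, d)`. -/
theorem stmt16 (n d : ℕ) (hd : d < n) (hn : n ≤ 2 * d) :
    P n d ≤ P (n + 1) (d + 1) :=
  P_le_P_of_map _ (insertLast_injective ⟨d, by omega⟩)
    fun _ _ => permDist_insertLast (by omega) hn rfl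
end

section
/- If d divides n (with n ≥ d ≥ 1) and d ≥ m ≥ 2, then P(n, m, d) = (n/d)^m. -/
/-- The Chebyshev distance between two functions on `{1,…,m}`
(represented on `Fin m`): `max_i |σ(i) − τ(i)|`. -/
def cheb {m : ℕ} (σ τ : Fin m → ℕ) : ℕ :=
  Finset.univ.sup fun i => Nat.dist (σ i) (τ i)

/-- `Pnm n m d` is the maximum cardinality of a set of injective functions
from `{1,…,m}` to `{1,…,n}` whose pairwise Chebyshev distance is at least
`d`. -/
noncomputable def Pnm (n m d : ℕ) : ℕ :=
  sSup {k | ∃ A : Finset (Fin m → ℕ),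
    (∀ σ ∈ A, Function.Injective σ ∧ ∀ i, σ i ∈ Finset.Icc 1 n) ∧
    (∀ σ ∈ A, ∀ τ ∈ A, σ ≠ τ → d ≤ cheb σ τ) ∧ A.card = k}

/-!
Cut `{1,…,dq}` into the `q` blocks `{dk+1,…,dk+d}`. Two functions whose values lie in the same
block at every coordinate are at Chebyshev distance `< d`, so a `d`-separated family is mapped
injectively to its block patterns `Fin m → Fin q`: at most `q^m` members. Conversely, for `m ≤ d`
the functions `i ↦ d·aᵢ + i + 1`, one for each pattern `a`, are injective (their offsets `i` are
distinct residues mod `d`) and pairwise `d`-separated, giving `q^m` members.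
-/

open Finset

lemma Nat.dist_lt_of_div_eq {x y d : ℕ} (hd : 0 < d) (h : x / d = y / d) :
    Nat.dist x y < d := by
  have hx := Nat.div_add_mod' x d
  have hy := Nat.div_add_mod' y d
  rw [← h] at hy
  have := Nat.mod_lt x hd
  have := Nat.mod_lt y hd
  simp only [Nat.dist]
  omega

section Cheb

variable {m : ℕ} {σ τ : Fin m → ℕ}

lemma dist_le_cheb (i : Fin m) : Nat.dist (σ i) (τ i) ≤ cheb σ τ :=
  le_sup (f := fun j => Nat.dist (σ j) (τ j)) (mem_univ i)

lemma cheb_lt_iff {d : ℕ} (hd : 0 < d) : cheb σ τ < d ↔ ∀ i, Nat.dist (σ i) (τ i) < d := by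
  simp [cheb, Finset.sup_lt_iff (show ⊥ < d from hd)]

end Cheb

def blockIndex {m : ℕ} (d : ℕ) (σ : Fin m → ℕ) : Fin m → ℕ := fun i => (σ i - 1) / d

lemma card_le_of_pairwise_le_cheb {m d q : ℕ} (hd : 0 < d) {A : Finset (Fin m → ℕ)}
    (hA : ∀ σ ∈ A, ∀ i, σ i ∈ Icc 1 (d * q))
    (hsep : (A : Set (Fin m → ℕ)).Pairwise fun σ τ => d ≤ cheb σ τ) :
    A.card ≤ q ^ m := by
  have hmaps :
      Set.MapsTo (blockIndex (m := m) d) A ↑(Fintype.piFinset fun _ : Fin m => range q) := by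
    intro σ hσ
    rw [mem_coe, Fintype.mem_piFinset]
    intro i
    rw [mem_range, blockIndex]
    have := mem_Icc.1 (hA σ hσ i)
    exact Nat.div_lt_of_lt_mul (by omega)
  have hinj : Set.InjOn (blockIndex (m := m) d) A := by
    intro σ hσ τ hτ hστ
    by_contra hne
    refine (hsep hσ hτ hne).not_gt ((cheb_lt_iff hd).2 fun i => ?_)
    have hσi := mem_Icc.1 (hA σ hσ i)
    have hτi := mem_Icc.1 (hA τ hτ i)
    have := Nat.dist_lt_of_div_eq hd (congrFun hστ i)
    rwa [← Nat.dist_add_add_right _ 1, Nat.sub_add_cancel hσi.1, Nat.sub_add_cancel hτi.1] at this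
  simpa [Fintype.card_piFinset] using card_le_card_of_injOn _ hmaps hinj

section BlockFun

variable {m q d : ℕ}

def blockFun (d : ℕ) (a : Fin m → Fin q) : Fin m → ℕ := fun i => d * a i + i + 1

lemma blockFun_injective (hmd : m ≤ d) (a : Fin m → Fin q) :
    Function.Injective (blockFun d a) := by
  intro i j hij
  have hmod := congrArg (· % d) (Nat.add_right_cancel (hij : d * a i + i + 1 = d * a j + j + 1))
  simp only [Nat.mul_add_mod, Nat.mod_eq_of_lt (i.2.trans_le hmd),
    Nat.mod_eq_of_lt (j.2.trans_le hmd)] at hmod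
  exact Fin.ext hmod

lemma blockFun_mem_Icc (hmd : m ≤ d) (a : Fin m → Fin q) (i : Fin m) :
    blockFun d a i ∈ Icc 1 (d * q) := by
  have : d * (a i + 1) ≤ d * q := Nat.mul_le_mul_left d (a i).2
  have := i.2
  simp only [blockFun, mem_Icc, mul_add] at *
  omega

lemma le_cheb_blockFun {a b : Fin m → Fin q} (hab : a ≠ b) :
    d ≤ cheb (blockFun d a) (blockFun d b) := by
  obtain ⟨i, hi⟩ := Function.ne_iff.1 hab
  calc d ≤ d * Nat.dist (a i) (b i) :=
        Nat.le_mul_of_pos_right d (Nat.dist_pos_of_ne (Fin.val_ne_of_ne hi))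
    _ = Nat.dist (blockFun d a i) (blockFun d b i) := by
        simp only [blockFun, Nat.dist_add_add_right, Nat.dist_mul_left]
    _ ≤ cheb (blockFun d a) (blockFun d b) := dist_le_cheb i

lemma blockFun_injective_left (hd : 0 < d) :
    Function.Injective (blockFun (m := m) (q := q) d) := by
  intro a b h
  by_contra hab
  exact (le_cheb_blockFun hab).not_gt ((cheb_lt_iff hd).2 fun i => by simpa [h] using hd)

end BlockFun

theorem stmt18_general (n m d : ℕ) (hdvd : d ∣ n) (hd : 1 ≤ d) (hmd : m ≤ d) :
    Pnm n m d = (n / d) ^ m := by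
  obtain ⟨q, rfl⟩ := hdvd
  rw [Nat.mul_div_cancel_left q hd]
  refine IsGreatest.csSup_eq ⟨⟨univ.image (blockFun (q := q) d), ?_, ?_, ?_⟩, ?_⟩
  · simp only [mem_image, mem_univ, true_and]
    rintro _ ⟨a, rfl⟩
    exact ⟨blockFun_injective hmd a, blockFun_mem_Icc hmd a⟩
  · simp only [mem_image, mem_univ, true_and]
    rintro _ ⟨a, rfl⟩ _ ⟨b, rfl⟩ hne
    exact le_cheb_blockFun fun hab => hne (hab ▸ rfl)
  · simp [card_image_of_injective _ (blockFun_injective_left hd)]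
  · rintro k ⟨A, hA, hsep, rfl⟩
    exact card_le_of_pairwise_le_cheb hd (fun σ hσ => (hA σ hσ).2) hsep

/-- If `d ∣ n` (with `n ≥ d ≥ 1`) and `d ≥ m ≥ 2`, then
`P(n, m, d) = (n/d)^m`. -/
theorem stmt18 (n m d : ℕ) (hdvd : d ∣ n) (hd : 1 ≤ d) (hdn : d ≤ n)
    (hm : 2 ≤ m) (hmd : m ≤ d) :
    Pnm n m d = (n / d) ^ m :=
  stmt18_general n m d hdvd hd hmd
end
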